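/- Let B ∈ ℝ^{m×n} have rank k, and let X ∈ ℝ^{m×n} be such that the matrix B Π_{row(X)} also has rank k, where Π_{row(X)} is the matrix of the orthogonal projection of ℝⁿ onto the row space of X. Then Π_{col(B Π_{row(X)})} · B = B; that is, one full sweep X ↦ Π_{col(B Π_{row(X)})} · B of the two-sided block power iteration recovers B exactly. -/

import Mathlib

open Matrix

/-- Matrix of the orthogonal projection of `ℝⁿ` onto the subspace `W`. -/
noncomputable def projMat {n : ℕ} (W : Submodule ℝ (EuclideanSpace ℝ (Fin n))) :
    Matrix (Fin n) (Fin n) ℝ :=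
  fun i j => (W.orthogonalProjection (EuclideanSpace.single j 1) : EuclideanSpace ℝ (Fin n)) i

/-- Column space of a matrix (its range as a linear map). -/
noncomputable def colSpace {m n : ℕ} (X : Matrix (Fin m) (Fin n) ℝ) :
    Submodule ℝ (EuclideanSpace ℝ (Fin m)) :=
  LinearMap.range (Matrix.toEuclideanLin X)

/-- Row space of a matrix. -/
noncomputable def rowSpace {m n : ℕ} (X : Matrix (Fin m) (Fin n) ℝ) :
    Submodule ℝ (EuclideanSpace ℝ (Fin n)) :=
  colSpace Xᵀ

/-! The column space of `B Π` sits inside that of `B`; equal ranks make them equal, and the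
projection onto the column space of `B` fixes `B`. -/

lemma toEuclideanLin_projMat {n : ℕ} (W : Submodule ℝ (EuclideanSpace ℝ (Fin n))) :
    toEuclideanLin (projMat W) = W.starProjection.toLinearMap := by
  refine (Module.Basis.ext (EuclideanSpace.basisFun (Fin n) ℝ).toBasis fun j => ?_).symm
  ext i
  simp [projMat, toLpLin_apply]

lemma projMat_mul_of_colSpace_le {m n : ℕ} {W : Submodule ℝ (EuclideanSpace ℝ (Fin m))}
    {A : Matrix (Fin m) (Fin n) ℝ} (hA : colSpace A ≤ W) : projMat W * A = A := by
  apply toEuclideanLin.injective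
  ext1 v
  rw [toLpLin_mul_same, LinearMap.comp_apply, toEuclideanLin_projMat,
    ContinuousLinearMap.coe_coe, Submodule.starProjection_eq_self_iff]
  exact hA (LinearMap.mem_range_self _ v)

lemma colSpace_mul_le {m n p : ℕ} (A : Matrix (Fin m) (Fin n) ℝ) (M : Matrix (Fin n) (Fin p) ℝ) :
    colSpace (A * M) ≤ colSpace A := by
  rw [colSpace, toLpLin_mul_same, LinearMap.range_comp]
  exact LinearMap.map_le_range

lemma rank_eq_finrank_colSpace {m n : ℕ} (A : Matrix (Fin m) (Fin n) ℝ) :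
    A.rank = Module.finrank ℝ (colSpace A) := by
  rw [colSpace, toEuclideanLin_eq_toLin_orthonormal]
  exact A.rank_eq_finrank_range_toLin _ _

lemma colSpace_mul_eq_of_rank_eq {m n p : ℕ} {A : Matrix (Fin m) (Fin n) ℝ}
    {M : Matrix (Fin n) (Fin p) ℝ} (h : (A * M).rank = A.rank) : colSpace (A * M) = colSpace A :=
  Submodule.eq_of_le_of_finrank_eq (colSpace_mul_le A M) <| by
    rwa [← rank_eq_finrank_colSpace, ← rank_eq_finrank_colSpace]

/-- If `rank B = k` and `rank (B Π_{row(X)}) = k`, then one full sweep of the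
two-sided block power iteration recovers `B` exactly:
`Π_{col(B Π_{row(X)})} ⬝ B = B`. -/
theorem stmt19 {m n k : ℕ} (B X : Matrix (Fin m) (Fin n) ℝ)
    (hB : B.rank = k) (hBX : (B * projMat (rowSpace X)).rank = k) :
    projMat (colSpace (B * projMat (rowSpace X))) * B = B :=
  projMat_mul_of_colSpace_le (colSpace_mul_eq_of_rank_eq (hBX.trans hB.symm)).ge
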